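/- Let K be an isolated non-saddle continuum of a flow on a locally compact metric space M such that K has arbitrarily small neighborhoods in M that are not disconnected by K (i.e., W∖K is connected). Then K is either an attractor or a repeller. -/
import Mathlib


open Set Filter Topology

variable {M : Type*}

/-- The positive semi-trajectory `γ⁺(x)`. -/
def posOrbit [TopologicalSpace M] (φ : Flow ℝ M) (x : M) : Set M :=
  {y | ∃ t : ℝ, 0 ≤ t ∧ φ t x = y}

/-- The negative semi-trajectory `γ⁻(x)`. -/
def negOrbit [TopologicalSpace M] (φ : Flow ℝ M) (x : M) : Set M :=
  {y | ∃ t : ℝ, t ≤ 0 ∧ φ t x = y}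

/-- The omega-limit set `ω(x) = ⋂_{t>0} closure (x·[t,∞))`. -/
def omegaLim [TopologicalSpace M] (φ : Flow ℝ M) (x : M) : Set M :=
  ⋂ t ∈ Set.Ioi (0:ℝ), closure {y | ∃ s : ℝ, t ≤ s ∧ φ s x = y}

/-- The negative omega-limit set `ω*(x) = ⋂_{t<0} closure (x·(-∞,t])`. -/
def alphaLim [TopologicalSpace M] (φ : Flow ℝ M) (x : M) : Set M :=
  ⋂ t ∈ Set.Iio (0:ℝ), closure {y | ∃ s : ℝ, s ≤ t ∧ φ s x = y}

/-- `K` is invariant under the flow. -/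
def FlowInvariant [TopologicalSpace M] (φ : Flow ℝ M) (K : Set M) : Prop :=
  ∀ x ∈ K, ∀ t : ℝ, φ t x ∈ K

/-- `K` is a compact invariant set which is the maximal invariant subset of some
compact neighborhood (an isolated invariant compactum). -/
def IsIsolatedInv [TopologicalSpace M] (φ : Flow ℝ M) (K : Set M) : Prop :=
  IsCompact K ∧ FlowInvariant φ K ∧
    ∃ N : Set M, IsCompact N ∧ K ⊆ interior N ∧
      ∀ x ∈ N, (∀ t : ℝ, φ t x ∈ N) → x ∈ K

/-- `K` is saddle: it admits a neighborhood `U` such that every neighborhood `V` of `K`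
contains a point whose positive and negative semi-trajectories both leave `U`. -/
def Saddle [TopologicalSpace M] (φ : Flow ℝ M) (K : Set M) : Prop :=
  ∃ U : Set M, K ⊆ interior U ∧ ∀ V : Set M, K ⊆ interior V →
    ∃ x ∈ V, ¬ posOrbit φ x ⊆ U ∧ ¬ negOrbit φ x ⊆ U

/-- `K` is non-saddle: every neighborhood `U` of `K` contains a neighborhood `V` of `K`
such that every point of `V` has `γ⁺(x) ⊆ U` or `γ⁻(x) ⊆ U`. -/
def NonSaddle [TopologicalSpace M] (φ : Flow ℝ M) (K : Set M) : Prop :=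
  ∀ U : Set M, K ⊆ interior U → ∃ V : Set M, K ⊆ interior V ∧ V ⊆ U ∧
    ∀ x ∈ V, posOrbit φ x ⊆ U ∨ negOrbit φ x ⊆ U

/-- The stable manifold (region of attraction) `A(K)`. -/
def Aset [TopologicalSpace M] (φ : Flow ℝ M) (K : Set M) : Set M :=
  {x | (omegaLim φ x).Nonempty ∧ omegaLim φ x ⊆ K}

/-- The unstable manifold (region of repulsion) `R(K)`. -/
def Rset [TopologicalSpace M] (φ : Flow ℝ M) (K : Set M) : Set M :=
  {x | (alphaLim φ x).Nonempty ∧ alphaLim φ x ⊆ K}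

/-- The region of influence `I(K) = A(K) ∪ R(K)`. -/
def Iset [TopologicalSpace M] (φ : Flow ℝ M) (K : Set M) : Set M :=
  Aset φ K ∪ Rset φ K

/-- `H(K) = A(K) ∩ R(K)`. -/
def Hset [TopologicalSpace M] (φ : Flow ℝ M) (K : Set M) : Set M :=
  Aset φ K ∩ Rset φ K

/-- The positive prolongational limit set `J⁺(x)`. -/
def Jplus [TopologicalSpace M] (φ : Flow ℝ M) (x : M) : Set M :=
  {y | ∃ (xs : ℕ → M) (ts : ℕ → ℝ), Tendsto xs atTop (𝓝 x) ∧
    Tendsto ts atTop atTop ∧ Tendsto (fun n => φ (ts n) (xs n)) atTop (𝓝 y)}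

/-- The negative prolongational limit set `J⁻(x)`. -/
def Jminus [TopologicalSpace M] (φ : Flow ℝ M) (x : M) : Set M :=
  {y | ∃ (xs : ℕ → M) (ts : ℕ → ℝ), Tendsto xs atTop (𝓝 x) ∧
    Tendsto ts atTop atBot ∧ Tendsto (fun n => φ (ts n) (xs n)) atTop (𝓝 y)}

/-- The two-sided prolongational limit set `J*(x)`. -/
def Jstar [TopologicalSpace M] (φ : Flow ℝ M) (x : M) : Set (M × M) :=
  {p | ∃ (xs : ℕ → M) (ts ss : ℕ → ℝ), Tendsto xs atTop (𝓝 x) ∧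
    Tendsto ts atTop atTop ∧ Tendsto ss atTop atBot ∧
    Tendsto (fun n => φ (ts n) (xs n)) atTop (𝓝 p.1) ∧
    Tendsto (fun n => φ (ss n) (xs n)) atTop (𝓝 p.2)}

/-- `x ∈ I(K)` is positively dissonant. -/
def PosDissonant [TopologicalSpace M] (φ : Flow ℝ M) (K : Set M) (x : M) : Prop :=
  x ∈ Iset φ K ∧ x ∉ Aset φ K ∧ (Jplus φ x ∩ K).Nonempty

/-- `x ∈ I(K)` is negatively dissonant. -/
def NegDissonant [TopologicalSpace M] (φ : Flow ℝ M) (K : Set M) (x : M) : Prop :=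
  x ∈ Iset φ K ∧ x ∉ Rset φ K ∧ (Jminus φ x ∩ K).Nonempty

/-- `x ∉ I(K)` is externally dissonant. -/
def ExtDissonant [TopologicalSpace M] (φ : Flow ℝ M) (K : Set M) (x : M) : Prop :=
  x ∉ Iset φ K ∧ (Jstar φ x ∩ K ×ˢ K).Nonempty

/-- `x` is a dissonant point of `K`. -/
def Dissonant [TopologicalSpace M] (φ : Flow ℝ M) (K : Set M) (x : M) : Prop :=
  PosDissonant φ K x ∨ NegDissonant φ K x ∨ ExtDissonant φ K x

/-- `N` is an isolating block for `K` with entrance set `Ni` and exit set `No`. -/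
structure IsolatingBlock [TopologicalSpace M] (φ : Flow ℝ M) (K N Ni No : Set M) : Prop where
  compact_N : IsCompact N
  nbhd : K ⊆ interior N
  maximal : ∀ x ∈ N, (∀ t : ℝ, φ t x ∈ N) → x ∈ K
  compact_Ni : IsCompact Ni
  compact_No : IsCompact No
  Ni_sub : Ni ⊆ frontier N
  No_sub : No ⊆ frontier N
  cover : frontier N = Ni ∪ No
  entrance : ∀ x ∈ Ni, ∃ ε > (0:ℝ), ∀ t ∈ Set.Ico (-ε) (0:ℝ), φ t x ∉ N
  exitSet : ∀ x ∈ No, ∃ δ > (0:ℝ), ∀ t ∈ Set.Ioc (0:ℝ) δ, φ t x ∉ N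
  tang_neg : ∀ x ∈ frontier N \ Ni, ∃ ε > (0:ℝ), ∀ t ∈ Set.Ico (-ε) (0:ℝ), φ t x ∈ interior N
  tang_pos : ∀ x ∈ frontier N \ No, ∃ δ > (0:ℝ), ∀ t ∈ Set.Ioc (0:ℝ) δ, φ t x ∈ interior N

/-- `p` is strongly influenced by `K`. -/
def StronglyInfluenced [TopologicalSpace M] (φ : Flow ℝ M) (K : Set M) (p : M) : Prop :=
  ∃ U ∈ 𝓝 p, ∀ V : Set M, K ⊆ interior V → ∃ T : ℝ, 0 ≤ T ∧ ∀ x ∈ U,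
    (∀ t : ℝ, T ≤ t → φ t x ∈ V) ∨ (∀ t : ℝ, t ≤ -T → φ t x ∈ V)

/-- `p` is strongly attracted by `K`. -/
def StronglyAttracted [TopologicalSpace M] (φ : Flow ℝ M) (K : Set M) (p : M) : Prop :=
  ∃ U ∈ 𝓝 p, ∀ V : Set M, K ⊆ interior V → ∃ T : ℝ, 0 ≤ T ∧ ∀ x ∈ U,
    ∀ t : ℝ, T ≤ t → φ t x ∈ V

/-- `p` is strongly repelled by `K`. -/
def StronglyRepelled [TopologicalSpace M] (φ : Flow ℝ M) (K : Set M) (p : M) : Prop :=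
  ∃ U ∈ 𝓝 p, ∀ V : Set M, K ⊆ interior V → ∃ T : ℝ, 0 ≤ T ∧ ∀ x ∈ U,
    ∀ t : ℝ, t ≤ -T → φ t x ∈ V

/-- `K` is (positively) stable. -/
def IsStable [TopologicalSpace M] (φ : Flow ℝ M) (K : Set M) : Prop :=
  ∀ U : Set M, K ⊆ interior U → ∃ V : Set M, K ⊆ interior V ∧ V ⊆ U ∧
    ∀ x ∈ V, ∀ t : ℝ, 0 ≤ t → φ t x ∈ V

/-- `K` is negatively stable. -/
def IsNegStable [TopologicalSpace M] (φ : Flow ℝ M) (K : Set M) : Prop :=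
  ∀ U : Set M, K ⊆ interior U → ∃ V : Set M, K ⊆ interior V ∧ V ⊆ U ∧
    ∀ x ∈ V, ∀ t : ℝ, t ≤ 0 → φ t x ∈ V

/-- `K` is an attractor: stable and attracting some neighborhood. -/
def IsAttractor [TopologicalSpace M] (φ : Flow ℝ M) (K : Set M) : Prop :=
  IsStable φ K ∧ ∃ W : Set M, K ⊆ interior W ∧ W ⊆ Aset φ K

/-- `K` is a repeller: negatively stable and repelling some neighborhood. -/
def IsRepeller [TopologicalSpace M] (φ : Flow ℝ M) (K : Set M) : Prop :=
  IsNegStable φ K ∧ ∃ W : Set M, K ⊆ interior W ∧ W ⊆ Rset φ K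


section Auxiliary

lemma Flow.reverse_apply' {M : Type*} [TopologicalSpace M] (φ : Flow ℝ M) (t : ℝ) (x : M) :
    φ.reverse t x = φ (-t) x := rfl

lemma omegaLim_reverse' {M : Type*} [TopologicalSpace M] (φ : Flow ℝ M) (x : M) :
    omegaLim φ.reverse x = alphaLim φ x := by
  have hset : ∀ t : ℝ, {y | ∃ s : ℝ, t ≤ s ∧ φ.reverse s x = y}
      = {y | ∃ s : ℝ, s ≤ -t ∧ φ s x = y} := by
    intro t
    ext y
    constructor
    · rintro ⟨s, hs, rfl⟩; exact ⟨-s, by linarith, rfl⟩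
    · rintro ⟨s, hs, rfl⟩
      exact ⟨-s, by linarith, by rw [Flow.reverse_apply', neg_neg]⟩
  ext y
  simp only [omegaLim, alphaLim, Set.mem_iInter, Set.mem_Ioi, Set.mem_Iio]
  constructor
  · intro h t ht
    have h2 := h (-t) (by linarith)
    rw [hset] at h2
    rwa [neg_neg] at h2
  · intro h t ht
    rw [hset]
    exact h (-t) (by linarith)

lemma Rset_reverse' {M : Type*} [TopologicalSpace M] (φ : Flow ℝ M) (K : Set M) :
    Aset φ.reverse K = Rset φ K := by
  unfold Aset Rset
  ext x
  rw [Set.mem_setOf_eq, Set.mem_setOf_eq, omegaLim_reverse']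

lemma omega_nonempty_subset' {M : Type*} [MetricSpace M] (φ : Flow ℝ M) {K N : Set M}
    (hN : IsCompact N) (hmax : ∀ x ∈ N, (∀ t : ℝ, φ t x ∈ N) → x ∈ K) {x : M}
    (hx : ∀ t : ℝ, 0 ≤ t → φ t x ∈ N) :
    (omegaLim φ x).Nonempty ∧ omegaLim φ x ⊆ K := by
  haveI : Nonempty (Set.Ioi (0:ℝ)) := ⟨⟨1, by norm_num⟩⟩
  set C : Set.Ioi (0:ℝ) → Set M :=
    fun t => closure {y | ∃ s : ℝ, (t:ℝ) ≤ s ∧ φ s x = y} with hCdef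
  have hsub : ∀ a b : Set.Ioi (0:ℝ), (a:ℝ) ≤ (b:ℝ) → C b ⊆ C a := by
    intro a b hab
    apply closure_mono
    rintro y ⟨s, hs, rfl⟩
    exact ⟨s, le_trans hab hs, rfl⟩
  have hCN : ∀ t, C t ⊆ N := by
    intro t
    apply closure_minimal _ hN.isClosed
    rintro y ⟨s, hs, rfl⟩
    exact hx s (le_trans t.2.le hs)
  have homega : omegaLim φ x = ⋂ t : Set.Ioi (0:ℝ), C t := by
    rw [omegaLim, Set.biInter_eq_iInter]
  have hne : (omegaLim φ x).Nonempty := by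
    rw [homega]
    apply IsCompact.nonempty_iInter_of_directed_nonempty_isCompact_isClosed
    · intro a b
      rcases le_total (a:ℝ) (b:ℝ) with h | h
      · exact ⟨b, hsub a b h, Set.Subset.rfl⟩
      · exact ⟨a, Set.Subset.rfl, hsub b a h⟩
    · intro t; exact ⟨φ (t:ℝ) x, subset_closure ⟨(t:ℝ), le_rfl, rfl⟩⟩
    · intro t; exact hN.of_isClosed_subset isClosed_closure (hCN t)
    · intro t; exact isClosed_closure
  refine ⟨hne, ?_⟩
  intro y hy
  have hyinv : ∀ s : ℝ, φ s y ∈ omegaLim φ x := by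
    intro s
    rw [homega, Set.mem_iInter]
    intro t
    have htpos : (0:ℝ) < |s| + (t:ℝ) := by
      have h1 := t.2
      have h2 := abs_nonneg s
      simp only [Set.mem_Ioi] at h1
      linarith
    have hy' : y ∈ C ⟨|s| + (t:ℝ), htpos⟩ := by
      rw [homega] at hy
      exact Set.mem_iInter.1 hy _
    have hmain : φ s y ∈ closure {z | ∃ u : ℝ, (t:ℝ) ≤ u ∧ φ u x = z} := by
      apply map_mem_closure (φ.continuous_toFun s) hy'
      rintro z ⟨u, hu, rfl⟩
      refine ⟨s + u, ?_, φ.map_add s u x⟩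
      have hu' : |s| + (t:ℝ) ≤ u := hu
      have h2 := neg_abs_le s
      linarith
    exact hmain
  have hyN : ∀ s : ℝ, φ s y ∈ N := by
    intro s
    have h1 := hyinv s
    rw [homega] at h1
    exact hCN ⟨1, by norm_num⟩ (Set.mem_iInter.1 h1 ⟨1, by norm_num⟩)
  have hy0 : y ∈ N := by
    have := hyN 0
    rwa [φ.map_zero_apply] at this
  exact hmax y hy0 hyN

lemma eventually_seg' {M : Type*} [MetricSpace M] (φ : Flow ℝ M) {O : Set M} (hO : IsOpen O)
    {k : M} {a b : ℝ} (h : ∀ t ∈ Set.Icc a b, φ t k ∈ O) :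
    ∀ᶠ x in 𝓝 k, ∀ t ∈ Set.Icc a b, φ t x ∈ O := by
  have hsub : Set.Icc a b ×ˢ ({k} : Set M) ⊆ Function.uncurry φ.toFun ⁻¹' O := by
    rintro ⟨t, x⟩ ⟨ht, hx⟩
    rcases hx with rfl
    exact h t ht
  obtain ⟨u, v, hu, hv, hau, hkv, huv⟩ :=
    generalized_tube_lemma isCompact_Icc isCompact_singleton (hO.preimage φ.cont') hsub
  filter_upwards [hv.mem_nhds (hkv rfl)] with x hx t ht
  exact huv (Set.mk_mem_prod (hau ht) hx)

lemma core_attractor' {M : Type*} [MetricSpace M] [LocallyCompactSpace M]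
    (φ : Flow ℝ M) {K N W : Set M}
    (hKc : IsCompact K) (hN : IsCompact N) (hKN : K ⊆ interior N)
    (hmax : ∀ x ∈ N, (∀ t : ℝ, φ t x ∈ N) → x ∈ K)
    (hInv : FlowInvariant φ K)
    (hKW : K ⊆ interior W) (hWN : W ⊆ N)
    (hWp : ∀ x ∈ W, ∀ t : ℝ, 0 ≤ t → φ t x ∈ N) :
    IsAttractor φ K := by
  constructor
  · -- stability
    intro U hU
    obtain ⟨C, hC, hKC, hCsub⟩ := exists_compact_between hKc
      (isOpen_interior.inter isOpen_interior)
      (fun k hk => ⟨hU hk, hKW hk⟩ : K ⊆ interior U ∩ interior W)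
    set V : Set M := {z | ∀ t : ℝ, 0 ≤ t → φ t z ∈ interior C} with hVdef
    have hCW : C ⊆ W := fun z hz => interior_subset (hCsub hz).2
    have hVU : V ⊆ U := by
      intro z hz
      have h0 := hz 0 le_rfl
      rw [φ.map_zero_apply] at h0
      exact interior_subset (hCsub (interior_subset h0)).1
    have hVinv : ∀ z ∈ V, ∀ t : ℝ, 0 ≤ t → φ t z ∈ V := by
      intro z hz t ht s hs
      rw [← φ.map_add]
      exact hz (s + t) (by linarith)
    refine ⟨V, ?_, hVU, hVinv⟩
    by_contra hcon
    obtain ⟨k, hk, hknot⟩ := Set.not_subset.1 hcon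
    rw [mem_interior_iff_mem_nhds] at hknot
    have hball : ∀ n : ℕ, ∃ z, (z ∈ Metric.ball k ((1:ℝ)/(n+1)) ∩ interior C) ∧ z ∉ V := by
      intro n
      by_contra hcon2
      push_neg at hcon2
      exact hknot (Filter.mem_of_superset
        (Filter.inter_mem (Metric.ball_mem_nhds k (by positivity))
          (isOpen_interior.mem_nhds (hKC hk))) hcon2)
    choose xs hxs1 hxs2 using hball
    have hxk : Filter.Tendsto xs Filter.atTop (𝓝 k) := by
      apply tendsto_iff_dist_tendsto_zero.2
      apply squeeze_zero (fun n => dist_nonneg)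
        (fun n => le_of_lt (Metric.mem_ball.1 (hxs1 n).1))
      exact tendsto_one_div_add_atTop_nhds_zero_nat
    set S : ℕ → Set ℝ := fun n => {t : ℝ | 0 ≤ t ∧ φ t (xs n) ∉ interior C} with hSdef
    have hSne : ∀ n, (S n).Nonempty := by
      intro n
      by_contra hcon2
      apply hxs2 n
      intro t ht
      by_contra hcon3
      exact hcon2 ⟨t, ht, hcon3⟩
    have hScl : ∀ n, IsClosed (S n) := by
      intro n
      have heq : S n = Set.Ici (0:ℝ) ∩ ((fun t => φ t (xs n)) ⁻¹' (interior C)ᶜ) := by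
        ext t; simp [hSdef, Set.mem_Ici, and_comm]
      rw [heq]
      exact isClosed_Ici.inter
        ((isOpen_interior.isClosed_compl).preimage (φ.continuous continuous_id continuous_const))
    have hbdd : ∀ n, BddBelow (S n) := fun n => ⟨0, fun t ht => ht.1⟩
    set ts : ℕ → ℝ := fun n => sInf (S n) with htsdef
    have hts : ∀ n, ts n ∈ S n := fun n => (hScl n).csInf_mem (hSne n) (hbdd n)
    have hbefore : ∀ n, ∀ t : ℝ, 0 ≤ t → t < ts n → φ t (xs n) ∈ interior C := by
      intro n t ht hlt
      by_contra hcon2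
      exact absurd (csInf_le (hbdd n) ⟨ht, hcon2⟩) (not_le.2 hlt)
    have htpos : ∀ n, 0 < ts n := by
      intro n
      rcases lt_or_eq_of_le (hts n).1 with h | h
      · exact h
      · exfalso
        have h2 := (hts n).2
        rw [← h, φ.map_zero_apply] at h2
        exact h2 (hxs1 n).2
    set ys : ℕ → M := fun n => φ (ts n) (xs n) with hysdef
    have hysC : ∀ n, ys n ∈ C := by
      intro n
      have h1 : ts n ∈ closure (Set.Ico 0 (ts n)) := by
        rw [closure_Ico (htpos n).ne]
        exact ⟨(htpos n).le, le_rfl⟩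
      have h2 : φ (ts n) (xs n) ∈ closure C := by
        apply map_mem_closure (φ.continuous continuous_id continuous_const) h1
        intro t htmem
        exact interior_subset (hbefore n t htmem.1 htmem.2)
      rw [hC.isClosed.closure_eq] at h2
      exact h2
    have ht_infty : ∀ T : ℝ, ∀ᶠ n in Filter.atTop, T < ts n := by
      intro T
      rcases le_or_gt T 0 with hT | hT
      · exact Filter.Eventually.of_forall (fun n => lt_of_le_of_lt hT (htpos n))
      · have hseg : ∀ t ∈ Set.Icc (0:ℝ) T, φ t k ∈ interior C :=
          fun t _ => hKC (hInv k hk t)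
        have hev := hxk.eventually (eventually_seg' φ isOpen_interior hseg)
        filter_upwards [hev] with n hn
        by_contra hcon2
        push_neg at hcon2
        exact (hts n).2 (hn (ts n) ⟨(hts n).1, hcon2⟩)
    obtain ⟨y, hyC, g, hgmono, hylim⟩ := hC.tendsto_subseq hysC
    have hynotint : y ∉ interior C :=
      (isOpen_interior.isClosed_compl).mem_of_tendsto hylim
        (Filter.Eventually.of_forall (fun m => (hts (g m)).2))
    have hyK : y ∉ K := fun h => hynotint (hKC h)
    have hyW : y ∈ W := hCW hyC
    have horb : ∀ t : ℝ, φ t y ∈ N := by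
      intro t
      rcases le_or_gt 0 t with ht | ht
      · exact hWp y hyW t ht
      · have hCN' : C ⊆ N := fun z hz => hWN (hCW hz)
        have hlim2 : Filter.Tendsto (fun m => φ t (ys (g m))) Filter.atTop (𝓝 (φ t y)) :=
          ((φ.continuous_toFun t).tendsto y).comp hylim
        have hmem : ∀ᶠ m in Filter.atTop, φ t (ys (g m)) ∈ C := by
          filter_upwards [(hgmono.tendsto_atTop).eventually (ht_infty (-t))] with m hm
          have h1 : φ t (ys (g m)) = φ (t + ts (g m)) (xs (g m)) := by
            simp only [hysdef]
            rw [φ.map_add]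
          rw [h1]
          exact interior_subset (hbefore (g m) (t + ts (g m)) (by linarith) (by linarith))
        exact hCN' ((hC.isClosed).mem_of_tendsto hlim2 hmem)
    have hyN : y ∈ N := hWN hyW
    exact hyK (hmax y hyN horb)
  · -- attraction
    refine ⟨W, hKW, fun x hx => ?_⟩
    exact omega_nonempty_subset' φ hN hmax (hWp x hx)

end Auxiliary

/-- an isolated non-saddle continuum with arbitrarily small neighborhoods
not disconnected by `K` is an attractor or a repeller. -/
theorem stmt17 {M : Type*} [MetricSpace M] [LocallyCompactSpace M]
    (φ : Flow ℝ M) (K : Set M)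
    (hIso : IsIsolatedInv φ K) (hConn : IsConnected K) (hNS : NonSaddle φ K)
    (hW : ∀ W₀ : Set M, K ⊆ interior W₀ →
      ∃ W : Set M, K ⊆ interior W ∧ W ⊆ W₀ ∧ IsPreconnected (W \ K)) :
    IsAttractor φ K ∨ IsRepeller φ K := by
  obtain ⟨hKc, hInv, N, hN, hKN, hmax⟩ := hIso
  obtain ⟨V₀, hKV₀, hV₀N, hV₀⟩ := hNS N hKN
  obtain ⟨W, hKW, hWV₀, hWconn⟩ := hW V₀ hKV₀
  have hWN : W ⊆ N := fun x hx => hV₀N (hWV₀ hx)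
  set A₁ : Set M := {x | ∀ t : ℝ, 0 ≤ t → φ t x ∈ N} with hA₁
  set R₁ : Set M := {x | ∀ t : ℝ, t ≤ 0 → φ t x ∈ N} with hR₁
  have hcover : ∀ x ∈ W \ K, x ∈ A₁ ∪ R₁ := by
    intro x hx
    rcases hV₀ x (hWV₀ hx.1) with h | h
    · exact Or.inl (fun t ht => h ⟨t, ht, rfl⟩)
    · exact Or.inr (fun t ht => h ⟨t, ht, rfl⟩)
  have hnotboth : ∀ x ∈ W \ K, ¬(x ∈ A₁ ∧ x ∈ R₁) := by
    rintro x hx ⟨h1, h2⟩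
    have horb : ∀ t : ℝ, φ t x ∈ N := fun t => (le_total 0 t).elim (h1 t) (h2 t)
    have hxN : x ∈ N := by
      have := horb 0
      rwa [φ.map_zero_apply] at this
    exact hx.2 (hmax x hxN horb)
  have hclosedA : IsClosed A₁ := by
    have heq : A₁ = ⋂ t ∈ Set.Ici (0:ℝ), (fun x => φ t x) ⁻¹' N := by
      ext x
      simp only [hA₁, Set.mem_setOf_eq, Set.mem_iInter, Set.mem_Ici, Set.mem_preimage]
    rw [heq]
    exact isClosed_biInter (fun t _ => hN.isClosed.preimage (φ.continuous_toFun t))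
  have hclosedR : IsClosed R₁ := by
    have heq : R₁ = ⋂ t ∈ Set.Iic (0:ℝ), (fun x => φ t x) ⁻¹' N := by
      ext x
      simp only [hR₁, Set.mem_setOf_eq, Set.mem_iInter, Set.mem_Iic, Set.mem_preimage]
    rw [heq]
    exact isClosed_biInter (fun t _ => hN.isClosed.preimage (φ.continuous_toFun t))
  have hdichot : (W \ K) ⊆ A₁ ∨ (W \ K) ⊆ R₁ := by
    by_contra hcon
    push_neg at hcon
    obtain ⟨a, ha, haA⟩ := Set.not_subset.1 hcon.1
    obtain ⟨b, hb, hbR⟩ := Set.not_subset.1 hcon.2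
    obtain ⟨z, hz1, hz2, hz3⟩ := hWconn A₁ᶜ R₁ᶜ hclosedA.isOpen_compl hclosedR.isOpen_compl
      (by
        intro x hx
        by_contra hx2
        simp only [Set.mem_union, Set.mem_compl_iff, not_or, not_not] at hx2
        exact hnotboth x hx hx2)
      ⟨a, ha, haA⟩ ⟨b, hb, hbR⟩
    rcases hcover z hz1 with h | h
    · exact hz2 h
    · exact hz3 h
  rcases hdichot with hA | hR
  · left
    apply core_attractor' φ hKc hN hKN hmax hInv hKW hWN
    intro x hx t ht
    by_cases hxK : x ∈ K
    · exact interior_subset (hKN (hInv x hxK t))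
    · exact hA ⟨hx, hxK⟩ t ht
  · right
    have hmax' : ∀ x ∈ N, (∀ t : ℝ, φ.reverse t x ∈ N) → x ∈ K := by
      intro x hx h
      apply hmax x hx
      intro t
      have h2 := h (-t)
      rwa [Flow.reverse_apply', neg_neg] at h2
    have hInv' : FlowInvariant φ.reverse K := fun x hx t => hInv x hx (-t)
    have hWp' : ∀ x ∈ W, ∀ t : ℝ, 0 ≤ t → φ.reverse t x ∈ N := by
      intro x hx t ht
      rw [Flow.reverse_apply']
      by_cases hxK : x ∈ K
      · exact interior_subset (hKN (hInv x hxK (-t)))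
      · exact hR ⟨hx, hxK⟩ (-t) (by linarith)
    obtain ⟨hstab, W', hKW', hW'⟩ :=
      core_attractor' φ.reverse hKc hN hKN hmax' hInv' hKW hWN hWp'
    refine ⟨?_, W', hKW', ?_⟩
    · intro U hU
      obtain ⟨V, h1, h2, h3⟩ := hstab U hU
      refine ⟨V, h1, h2, fun x hx t ht => ?_⟩
      have h4 := h3 x hx (-t) (by linarith)
      rwa [Flow.reverse_apply', neg_neg] at h4
    · rw [← Rset_reverse']
      exact hW'
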